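/- arXiv:math-ph/0303007 — 3 statements merged into one kernel-verified Lean document; each statement's English description precedes it below -/
import Mathlib

section
/- For every s ∈ ℝ (including points where the line crosses the x₃-axis, i.e. u(s) = 0), the function s ↦ ∫₀^{φ(s)} a(t) dt is differentiable at s with derivative equal to ⟨A(x(s)), ω⟩. -/
open Real MeasureTheory Filter
open scoped RealInnerProductSpace Topology

noncomputable section

/-- `ℝ³` as a Euclidean space. -/
abbrev E3 := EuclideanSpace ℝ (Fin 3)

/-- The colatitude `φ_x = arccos(x₃/|x|)` of a point of `ℝ³`. -/
def colat (x : E3) : ℝ := Real.arccos (x 2 / ‖x‖)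

/-- The unit vector `e_{φ_x}` of spherical coordinates. -/
def ephi (x : E3) : E3 :=
  (1 / ‖x‖) • (WithLp.equiv 2 (Fin 3 → ℝ)).symm
    ![x 0 * x 2 / Real.sqrt ((x 0)^2 + (x 1)^2),
      x 1 * x 2 / Real.sqrt ((x 0)^2 + (x 1)^2),
      - Real.sqrt ((x 0)^2 + (x 1)^2)]

/-- The magnetic potential `A(x) = (a(φ_x)/|x|) e_{φ_x}` (set to `0` on the `x₃`-axis). -/
def magA (a : ℝ → ℝ) (x : E3) : E3 :=
  if 0 < (x 0)^2 + (x 1)^2 then (a (colat x) / ‖x‖) • ephi x else 0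

/-! Off the `x₃`-axis the colatitude is smooth with gradient `e_φ / |x|`, so the chain rule and
the fundamental theorem of calculus give the derivative `a(φ) ⟨e_φ, ω⟩ / |x| = ⟨A, ω⟩`. On the
axis `φ ∈ {0, π}`, where `a` vanishes nearby; as the line avoids the origin, `φ` is continuous
there, so `s ↦ ∫₀^{φ(s)} a` is locally constant and its derivative is `0 = ⟨A, ω⟩`. -/

section InnerProductSpace

variable {F : Type*} [NormedAddCommGroup F] [InnerProductSpace ℝ F]

theorem add_smul_ne_zero_of_inner_eq_zero {b ω : F} (hbω : ⟪b, ω⟫ = 0) (hb : b ≠ 0) (s : ℝ) :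
    b + s • ω ≠ 0 := by
  intro h
  have : ⟪b + s • ω, b⟫ = 0 := by rw [h, inner_zero_left]
  rw [inner_add_left, real_inner_self_eq_norm_sq, real_inner_smul_left, real_inner_comm, hbω,
    mul_zero, add_zero] at this
  exact hb (norm_eq_zero.mp (pow_eq_zero_iff two_ne_zero |>.mp this))

theorem HasDerivAt.norm {f : ℝ → F} {f' : F} {x : ℝ} (hf : HasDerivAt f f' x) (h0 : f x ≠ 0) :
    HasDerivAt (fun y => ‖f y‖) (⟪f x, f'⟫ / ‖f x‖) x := by
  have hsq := hf.norm_sq.sqrt (by positivity)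
  simp only [Real.sqrt_sq (norm_nonneg _)] at hsq
  convert hsq using 1
  field_simp

end InnerProductSpace

theorem eventuallyEq_primitive_of_eventuallyEq_zero {E : Type*} [NormedAddCommGroup E]
    [NormedSpace ℝ E] {a : ℝ → E} {y₀ : ℝ} (ha : Continuous a) (h : a =ᶠ[𝓝 y₀] 0) :
    (fun y => ∫ t in (0:ℝ)..y, a t) =ᶠ[𝓝 y₀] fun _ => ∫ t in (0:ℝ)..y₀, a t := by
  obtain ⟨l, u, hy₀, hlu⟩ := mem_nhds_iff_exists_Ioo_subset.mp h
  filter_upwards [Ioo_mem_nhds hy₀.1 hy₀.2] with y hy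
  rw [← sub_eq_zero, intervalIntegral.integral_interval_sub_left (ha.intervalIntegrable _ _)
    (ha.intervalIntegrable _ _)]
  rw [intervalIntegral.integral_congr (g := fun _ => 0)
    fun t ht => hlu (Set.ordConnected_Ioo.uIcc_subset hy₀ hy ht),
    intervalIntegral.integral_zero]

namespace E3

theorem norm_sq_eq (x : E3) : ‖x‖ ^ 2 = x 0 ^ 2 + x 1 ^ 2 + x 2 ^ 2 := by
  simp [EuclideanSpace.norm_sq_eq, Fin.sum_univ_three]

theorem inner_eq (x v : E3) : ⟪x, v⟫ = x 0 * v 0 + x 1 * v 1 + x 2 * v 2 := by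
  simp [PiLp.inner_apply, Fin.sum_univ_three, mul_comm]

theorem hasDerivAt_apply {γ : ℝ → E3} {v : E3} {s : ℝ} (hγ : HasDerivAt γ v s) (i : Fin 3) :
    HasDerivAt (fun t => γ t i) (v i) s :=
  (EuclideanSpace.proj (𝕜 := ℝ) i).hasFDerivAt.comp_hasDerivAt s hγ

theorem sqrt_one_sub_sq_div_norm {x : E3} (hx : x ≠ 0) :
    √(1 - (x 2 / ‖x‖) ^ 2) = √(x 0 ^ 2 + x 1 ^ 2) / ‖x‖ := by
  have hr : 0 < ‖x‖ := norm_pos_iff.mpr hx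
  rw [← Real.sqrt_sq hr.le, ← Real.sqrt_div' _ (sq_nonneg _), Real.sqrt_sq hr.le]
  congr 1
  field_simp
  linear_combination norm_sq_eq x

end E3

theorem inner_ephi (x v : E3) :
    ⟪ephi x, v⟫ = (x 0 * x 2 / √(x 0 ^ 2 + x 1 ^ 2) * v 0 + x 1 * x 2 / √(x 0 ^ 2 + x 1 ^ 2) * v 1
      - √(x 0 ^ 2 + x 1 ^ 2) * v 2) / ‖x‖ := by
  simp only [ephi, one_div, WithLp.equiv_symm_apply, inner_smul_left, map_inv₀, ringHom_apply,
    E3.inner_eq, Matrix.cons_val_zero, Matrix.cons_val_one, Matrix.cons_val]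
  ring

theorem continuousAt_colat {x : E3} (hx : x ≠ 0) : ContinuousAt colat x := by
  unfold colat
  have : ‖x‖ ≠ 0 := norm_ne_zero_iff.mpr hx
  fun_prop (disch := exact this)

theorem colat_eq_zero_or_pi {x : E3} (hx : x ≠ 0) (haxis : x 0 ^ 2 + x 1 ^ 2 = 0) :
    colat x = 0 ∨ colat x = π := by
  have hr : 0 < ‖x‖ := norm_pos_iff.mpr hx
  have h : (x 2 - ‖x‖) * (x 2 + ‖x‖) = 0 := by nlinarith [E3.norm_sq_eq x]
  rcases mul_eq_zero.mp h with h | h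
  · left
    rw [colat, show x 2 = ‖x‖ by linarith, div_self hr.ne', Real.arccos_one]
  · right
    rw [colat, show x 2 = -‖x‖ by linarith, neg_div, div_self hr.ne', Real.arccos_neg_one]

theorem HasDerivAt.colat {γ : ℝ → E3} {v : E3} {s : ℝ} (hγ : HasDerivAt γ v s)
    (hu : 0 < γ s 0 ^ 2 + γ s 1 ^ 2) :
    HasDerivAt (fun t => colat (γ t)) (⟪ephi (γ s), v⟫ / ‖γ s‖) s := by
  set x := γ s
  have hx : x ≠ 0 := by rintro hx; simp [hx] at hu
  have hr : 0 < ‖x‖ := norm_pos_iff.mpr hx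
  have hsq : (x 2 / ‖x‖) ^ 2 < 1 := by
    rw [div_pow, div_lt_one (by positivity)]; nlinarith [E3.norm_sq_eq x]
  have hg := (E3.hasDerivAt_apply hγ 2).div (hγ.norm hx) hr.ne'
  rw [show γ s = x from rfl] at hg
  have harccos := Real.hasDerivAt_arccos (x := x 2 / ‖x‖) (by nlinarith) (by nlinarith)
  refine HasDerivAt.congr_deriv (f := fun t => _root_.colat (γ t)) (harccos.comp s hg) ?_
  have hu' : 0 < √(x 0 ^ 2 + x 1 ^ 2) := Real.sqrt_pos.mpr hu
  rw [inner_ephi, E3.sqrt_one_sub_sq_div_norm hx, E3.inner_eq]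
  field_simp
  linear_combination v 2 * Real.sq_sqrt hu.le - v 2 * E3.norm_sq_eq x

theorem hasDerivAt_primitive_colat {a : ℝ → ℝ} (ha : Continuous a)
    (hsupp : tsupport a ⊆ Set.Ioo 0 π) {γ : ℝ → E3} {v : E3} {s : ℝ} (hγ : HasDerivAt γ v s)
    (h0 : γ s ≠ 0) :
    HasDerivAt (fun t => ∫ y in (0:ℝ)..colat (γ t), a y) ⟪magA a (γ s), v⟫ s := by
  by_cases hu : 0 < γ s 0 ^ 2 + γ s 1 ^ 2
  · refine ((ha.integral_hasStrictDerivAt 0 _).hasDerivAt.comp s (hγ.colat hu)).congr_deriv ?_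
    rw [magA, if_pos hu, real_inner_smul_left]
    ring
  · have haxis : γ s 0 ^ 2 + γ s 1 ^ 2 = 0 := le_antisymm (not_lt.mp hu) (by positivity)
    have hpole : colat (γ s) ∉ Set.Ioo 0 π := by
      rcases colat_eq_zero_or_pi h0 haxis with h | h <;> simp [h]
    have hvanish : a =ᶠ[𝓝 (colat (γ s))] 0 :=
      notMem_tsupport_iff_eventuallyEq.mp fun hmem => hpole (hsupp hmem)
    rw [magA, if_neg hu, inner_zero_left]
    exact (hasDerivAt_const s _).congr_of_eventuallyEq <|
      (eventuallyEq_primitive_of_eventuallyEq_zero ha hvanish).comp_tendsto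
        ((continuousAt_colat h0).comp hγ.continuousAt)

theorem primitive_a_of_colat_hasDerivAt_general (a : ℝ → ℝ) (ha : ContDiff ℝ (⊤ : ℕ∞) a)
    (hsupp : tsupport a ⊆ Set.Ioo 0 Real.pi)
    (ω b : E3) (hbω : ⟪b, ω⟫ = 0) (hb : b ≠ 0) (s : ℝ) :
    HasDerivAt
      (fun s : ℝ => ∫ t in (0:ℝ)..(Real.arccos ((b 2 + s * ω 2) / ‖b + s • ω‖)), a t)
      ⟪magA a (b + s • ω), ω⟫ s := by
  have hline : HasDerivAt (fun t : ℝ => b + t • ω) ω s := by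
    simpa using ((hasDerivAt_id s).smul_const ω).const_add b
  have hfun : (fun s : ℝ => ∫ t in (0:ℝ)..(Real.arccos ((b 2 + s * ω 2) / ‖b + s • ω‖)), a t) =
      fun t => ∫ y in (0:ℝ)..colat (b + t • ω), a y := rfl
  rw [hfun]
  exact hasDerivAt_primitive_colat ha.continuous hsupp hline
    (add_smul_ne_zero_of_inner_eq_zero hbω hb s)

/-- Along the line `x(s) = b + sω` (with `|ω| = 1`, `⟨b,ω⟩ = 0`, `b ≠ 0`),
for every `s ∈ ℝ` (including the points where the line crosses the `x₃`-axis, i.e. where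
`u(s) = 0`), the function `s ↦ ∫₀^{φ(s)} a(t) dt` is differentiable at `s` with derivative
`⟨A(x(s)), ω⟩`. -/
theorem primitive_a_of_colat_hasDerivAt (a : ℝ → ℝ) (ha : ContDiff ℝ (⊤ : ℕ∞) a)
    (hpos : ∀ t, 0 ≤ a t) (hcs : HasCompactSupport a)
    (hsupp : tsupport a ⊆ Set.Ioo 0 Real.pi)
    (ω b : E3) (hω : ‖ω‖ = 1) (hbω : ⟪b, ω⟫ = 0) (hb : b ≠ 0) (s : ℝ) :
    HasDerivAt
      (fun s : ℝ => ∫ t in (0:ℝ)..(Real.arccos ((b 2 + s * ω 2) / ‖b + s • ω‖)), a t)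
      ⟪magA a (b + s • ω), ω⟫ s :=
  primitive_a_of_colat_hasDerivAt_general a ha hsupp ω b hbω hb s
end
end

section
/- Fix c ∈ ℝ and define Ψ : ℝ³ → ℝ by Ψ(x) = ∫_c^{φ_x} a(t) dt. Then Ψ is infinitely differentiable (C^∞) on the open set ℝ³ ∖ {0}; in particular it is smooth even at points of the x₃-axis, where arccos itself fails to be differentiable, because a vanishes near the endpoints 0 and π. -/
open Real MeasureTheory Filter
open scoped RealInnerProductSpace Topology

noncomputable section

/-!
Write `F(s) = ∫_c^s a`, so that `Ψ = (F ∘ arccos) ∘ (x ↦ x₃/|x|)`. The inner map is smooth away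
from the origin and `F` is smooth, so the only issue is `arccos` at `±1`. But `arccos` is continuous
with `arccos 1 = 0` and `arccos (-1) = π`, and `F` is constant near `0` and near `π` because `a`
vanishes there; hence `F ∘ arccos` is locally constant near `±1` and smooth on all of `ℝ`.
-/

open Set

section

variable {E : Type*} [NormedAddCommGroup E] [NormedSpace ℝ E]

lemma contDiff_primitive [CompleteSpace E] {a : ℝ → E} {n : ℕ∞} (ha : ContDiff ℝ n a) (c : ℝ) :
    ContDiff ℝ (n + 1) (fun s => ∫ t in c..s, a t) := by
  have hderiv : ∀ s, HasDerivAt (fun s => ∫ t in c..s, a t) (a s) s := fun s =>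
    intervalIntegral.integral_hasDerivAt_right (ha.continuous.intervalIntegrable c s)
      (ha.continuous.stronglyMeasurableAtFilter _ _) ha.continuous.continuousAt
  rw [contDiff_succ_iff_deriv]
  refine ⟨fun s => (hderiv s).differentiableAt, fun h => absurd h (by simp), ?_⟩
  rwa [funext fun s => (hderiv s).deriv]

lemma eventuallyConst_primitive {a : ℝ → E} (ha : Continuous a) (c : ℝ) {s₀ : ℝ}
    (h : a =ᶠ[𝓝 s₀] 0) : EventuallyConst (fun s => ∫ t in c..s, a t) (𝓝 s₀) := by
  obtain ⟨ε, hε, hzero⟩ := Metric.eventually_nhds_iff_ball.1 h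
  refine eventuallyConst_iff_exists_eventuallyEq.2
    ⟨∫ t in c..s₀, a t, Metric.eventually_nhds_iff_ball.2 ⟨ε, hε, fun s hs => ?_⟩⟩
  have hvanish : ∫ t in s₀..s, a t = 0 := by
    refine intervalIntegral.integral_zero_ae (Eventually.of_forall fun t ht => hzero t ?_)
    refine (convex_ball s₀ ε).segment_subset (Metric.mem_ball_self hε) hs ?_
    exact segment_eq_uIcc s₀ s ▸ uIoc_subset_uIcc ht
  show ∫ t in c..s, a t = ∫ t in c..s₀, a t
  rw [← intervalIntegral.integral_add_adjacent_intervals (ha.intervalIntegrable c s₀)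
    (ha.intervalIntegrable s₀ s), hvanish, add_zero]

end

lemma Filter.EventuallyConst.contDiffAt {𝕜 E F : Type*} [NontriviallyNormedField 𝕜]
    [NormedAddCommGroup E] [NormedSpace 𝕜 E] [NormedAddCommGroup F] [NormedSpace 𝕜 F]
    {f : E → F} {x : E} (hf : EventuallyConst f (𝓝 x)) {n : WithTop ℕ∞} :
    ContDiffAt 𝕜 n f x := by
  obtain ⟨c, hc⟩ := hf.eventuallyEq_const
  exact contDiffAt_const.congr_of_eventuallyEq hc

lemma contDiff_comp_arccos {F : Type*} [NormedAddCommGroup F] [NormedSpace ℝ F] {f : ℝ → F}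
    {n : WithTop ℕ∞} (hf : ContDiff ℝ n f) (h₀ : EventuallyConst f (𝓝 0))
    (hπ : EventuallyConst f (𝓝 π)) : ContDiff ℝ n (f ∘ Real.arccos) := by
  refine contDiff_iff_contDiffAt.2 fun u => ?_
  by_cases hu₁ : u = 1
  · subst hu₁
    refine (h₀.comp_tendsto ?_).contDiffAt
    simpa [Real.arccos_one] using Real.continuous_arccos.tendsto 1
  by_cases hu₂ : u = -1
  · subst hu₂
    refine (hπ.comp_tendsto ?_).contDiffAt
    simpa [Real.arccos_neg_one] using Real.continuous_arccos.tendsto (-1)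
  exact hf.contDiffAt.comp u (Real.contDiffAt_arccos hu₂ hu₁)

theorem phase_smooth_away_from_origin_general (a : ℝ → ℝ) (ha : ContDiff ℝ (⊤ : ℕ∞) a)
    (hsupp : tsupport a ⊆ Set.Ioo 0 Real.pi) (c : ℝ) :
    ContDiffOn ℝ (⊤ : ℕ∞) (fun y : E3 => ∫ t in c..(colat y), a t)
      ({(0 : E3)}ᶜ) := by
  have hvanish : ∀ s ∉ Ioo 0 π, a =ᶠ[𝓝 s] 0 := fun s hs =>
    notMem_tsupport_iff_eventuallyEq.1 fun h => hs (hsupp h)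
  have hF : ContDiff ℝ (⊤ : ℕ∞) ((fun s => ∫ t in c..s, a t) ∘ Real.arccos) :=
    contDiff_comp_arccos ((contDiff_primitive ha c).of_le le_self_add)
      (eventuallyConst_primitive ha.continuous c (hvanish 0 (by simp)))
      (eventuallyConst_primitive ha.continuous c (hvanish π (by simp)))
  have hcos : ContDiffOn ℝ (⊤ : ℕ∞) (fun y : E3 => y 2 / ‖y‖) {0}ᶜ := fun y hy =>
    ((EuclideanSpace.proj (2 : Fin 3)).contDiff.contDiffAt.div (contDiffAt_norm ℝ hy)
      (norm_ne_zero_iff.2 hy)).contDiffWithinAt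
  exact hF.comp_contDiffOn hcos

/-- For `Ψ(x) = ∫_c^{φ_x} a(t) dt`, the function `Ψ` is `C^∞` on
`ℝ³ ∖ {0}` (in particular also at the points of the `x₃`-axis, where `arccos` itself fails
to be differentiable, because `a` vanishes near the endpoints `0` and `π`). -/
theorem phase_smooth_away_from_origin (a : ℝ → ℝ) (ha : ContDiff ℝ (⊤ : ℕ∞) a)
    (hpos : ∀ t, 0 ≤ a t) (hcs : HasCompactSupport a)
    (hsupp : tsupport a ⊆ Set.Ioo 0 Real.pi) (c : ℝ) :
    ContDiffOn ℝ (⊤ : ℕ∞) (fun y : E3 => ∫ t in c..(colat y), a t)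
      ({(0 : E3)}ᶜ) :=
  phase_smooth_away_from_origin_general a ha hsupp c
end
end

section
/- Let φ₀ = ∫₀^π a(φ) dφ and define w : S² → ℂ by w(ω) = exp(i·∫_{π−φ_ω}^{φ_ω} a(φ) dφ), where S² is the unit sphere of ℝ³. Then the range of w is exactly the circular arc { exp(iν) : ν ∈ [−φ₀, φ₀] } of the unit circle. (This set is the essential spectrum of the scattering matrix S(λ) for the toroidal-coil Schrödinger operator, so it depends only on the magnetic flux φ₀.) -/
open Real MeasureTheory Filter
open scoped RealInnerProductSpace Topology

noncomputable section

/-- With `φ₀ = ∫₀^π a(φ) dφ` and `w(ω) = exp(i ∫_{π−φ_ω}^{φ_ω} a(φ) dφ)`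
on the unit sphere `S²`, the range of `w` is exactly the circular arc
`{ exp(iν) : ν ∈ [−φ₀, φ₀] }` of the unit circle. (This set is the essential spectrum of the
scattering matrix `S(λ)` for the toroidal-coil Schrödinger operator, so it depends only on the
magnetic flux `φ₀`.) -/
theorem range_of_w (a : ℝ → ℝ) (ha : ContDiff ℝ (⊤ : ℕ∞) a)
    (hpos : ∀ t, 0 ≤ a t) (hcs : HasCompactSupport a)
    (hsupp : tsupport a ⊆ Set.Ioo 0 Real.pi) :
    (fun ω : E3 =>
        Complex.exp (Complex.I * ((∫ φ in (Real.pi - colat ω)..(colat ω), a φ : ℝ) : ℂ)))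
        '' (Metric.sphere 0 1)
      = (fun ν : ℝ => Complex.exp (Complex.I * (ν : ℂ))) ''
          Set.Icc (-(∫ φ in (0:ℝ)..Real.pi, a φ)) (∫ φ in (0:ℝ)..Real.pi, a φ) := by

  classical
  have hca : Continuous a := ha.continuous
  have hint : ∀ x y : ℝ, IntervalIntegrable a volume x y :=
    fun x y => hca.intervalIntegrable x y
  set φ₀ : ℝ := ∫ φ in (0:ℝ)..Real.pi, a φ with hφ₀
  set G : ℝ → ℝ := fun x => ∫ t in (0:ℝ)..x, a t with hGdef
  set F : ℝ → ℝ := fun φ => ∫ t in (Real.pi - φ)..φ, a t with hFdef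
  have hFG : ∀ φ, F φ = G φ - G (Real.pi - φ) := by
    intro φ
    have h := intervalIntegral.integral_add_adjacent_intervals
      (hint (Real.pi - φ) 0) (hint 0 φ)
    have h2 : (∫ t in (Real.pi - φ)..(0:ℝ), a t) = - G (Real.pi - φ) := by
      rw [intervalIntegral.integral_symm]
    simp only [F, G] at *
    linarith [h]
  have hGsub : ∀ x y : ℝ, G y - G x = ∫ t in x..y, a t := by
    intro x y
    have h := intervalIntegral.integral_add_adjacent_intervals (hint 0 x) (hint x y)
    simp only [G]; linarith [h]
  have hGmono : Monotone G := by
    intro x y hxy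
    have h := hGsub x y
    have h2 : (0:ℝ) ≤ ∫ t in x..y, a t :=
      intervalIntegral.integral_nonneg hxy (fun u _ => hpos u)
    linarith
  have hG0 : G 0 = 0 := intervalIntegral.integral_same
  have hGπ : G Real.pi = φ₀ := rfl
  have hGcont : Continuous G := intervalIntegral.continuous_primitive hint 0
  have hFcont : Continuous F := by
    have h1 : Continuous fun φ : ℝ => Real.pi - φ := continuous_const.sub continuous_id
    have h2 : F = fun φ => G φ - G (Real.pi - φ) := funext hFG
    rw [h2]; exact hGcont.sub (hGcont.comp h1)
  have hF0 : F 0 = -φ₀ := by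
    simp only [hFG 0, sub_zero, hG0, hGπ]; ring
  have hFπ : F Real.pi = φ₀ := by
    simp only [hFG Real.pi, sub_self, hG0, hGπ]; ring
  have hFmem : ∀ φ ∈ Set.Icc (0:ℝ) Real.pi, F φ ∈ Set.Icc (-φ₀) φ₀ := by
    rintro φ ⟨h0, hπ⟩
    have h1 : G 0 ≤ G φ := hGmono h0
    have h2 : G φ ≤ G Real.pi := hGmono hπ
    have h3 : G 0 ≤ G (Real.pi - φ) := hGmono (by linarith)
    have h4 : G (Real.pi - φ) ≤ G Real.pi := hGmono (by linarith)
    rw [hG0] at h1 h3; rw [hGπ] at h2 h4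
    constructor <;> [skip; skip] <;> (rw [hFG]; linarith)
  ext z
  constructor
  · rintro ⟨ω, hω, rfl⟩
    have h0 : 0 ≤ colat ω := Real.arccos_nonneg _
    have hπ : colat ω ≤ Real.pi := Real.arccos_le_pi _
    exact ⟨F (colat ω), hFmem _ ⟨h0, hπ⟩, rfl⟩
  · rintro ⟨ν, hν, rfl⟩
    have hsurj : Set.Icc (-φ₀) φ₀ ⊆ F '' Set.Icc 0 Real.pi := by
      have := intermediate_value_Icc Real.pi_pos.le hFcont.continuousOn
      rwa [hF0, hFπ] at this
    obtain ⟨φ, ⟨hφ0, hφπ⟩, hFφ⟩ := hsurj hν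
    set ω : E3 := (WithLp.equiv 2 (Fin 3 → ℝ)).symm ![Real.sin φ, 0, Real.cos φ] with hωdef
    have hcoord : ∀ i, ω i = ![Real.sin φ, 0, Real.cos φ] i := fun i => rfl
    have hnorm : ‖ω‖ = 1 := by
      rw [EuclideanSpace.norm_eq]
      have h1 : (∑ i, ‖ω i‖ ^ 2) = 1 := by
        simp only [hcoord, Fin.sum_univ_three, Real.norm_eq_abs, sq_abs, Matrix.cons_val_zero, Matrix.cons_val_one, Matrix.head_cons, Matrix.cons_val_two, Matrix.tail_cons]
        nlinarith [Real.sin_sq_add_cos_sq φ]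
      rw [h1, Real.sqrt_one]
    have hcolat : colat ω = φ := by
      rw [colat, hnorm, hcoord 2]
      simp [Real.arccos_cos hφ0 hφπ]
    refine ⟨ω, ?_, ?_⟩
    · rw [mem_sphere_zero_iff_norm, hnorm]
    · simp only [hcolat]
      show Complex.exp (Complex.I * ((F φ : ℝ) : ℂ)) = Complex.exp (Complex.I * (ν : ℂ))
      rw [hFφ]
end
end
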